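/- Let $n, k \in \mathbb{Z}$ with $k < n$, let $B_k$ be the ball of radius $2^{-k}$ centered at the origin, and for a ball $B$ let $\mathcal{I}(B, n)$ denote the union over all dyadic cubes $Q$ of side length $2^{-n}$ meeting the boundary $\partial B$ of the sets $B \cap Q$. Define $M_{k,n} u(x) = \frac{1}{|B_k|} \int_{\mathcal{I}(x+B_k, n)} u(y)\, dy$. Then for $1 \leq p \leq \infty$ and $u \in L^p(\mathbb{R}^d)$, $\|M_{k,n} u\|_{L^p} \leq C_d\, 2^{k-n} \|u\|_{L^p}$ with $C_d$ depending only on $d$. -/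

import Mathlib

open MeasureTheory
open scoped ENNReal

/-- The dyadic cube of side length `2^(-n)` containing `x`. -/
def dyadicCubeOf (d : ℕ) (n : ℤ) (x : EuclideanSpace ℝ (Fin d)) :
    Set (EuclideanSpace ℝ (Fin d)) :=
  {y | ∀ i, ⌊(2:ℝ) ^ n * y i⌋ = ⌊(2:ℝ) ^ n * x i⌋}

/-- `𝓘(x + B_k, n)`: the union, over all dyadic cubes `Q` of side length `2^(-n)`
meeting the boundary sphere of `x + B_k`, of the sets `(x + B_k) ∩ Q`. -/
def boundaryPiece (d : ℕ) (k n : ℤ) (x : EuclideanSpace ℝ (Fin d)) :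
    Set (EuclideanSpace ℝ (Fin d)) :=
  {y | y ∈ Metric.ball x ((2:ℝ) ^ (-k)) ∧
    (dyadicCubeOf d n y ∩ Metric.sphere x ((2:ℝ) ^ (-k))).Nonempty}

/-- `M_{k,n} u (x) = |B_k|⁻¹ ∫_{𝓘(x+B_k,n)} u`. -/
noncomputable def Mkn (d : ℕ) (k n : ℤ) (u : EuclideanSpace ℝ (Fin d) → ℝ)
    (x : EuclideanSpace ℝ (Fin d)) : ℝ :=
  ((volume (Metric.ball (0 : EuclideanSpace ℝ (Fin d)) ((2:ℝ) ^ (-k)))).toReal)⁻¹ *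
    ∫ y in boundaryPiece d k n x, u y

/-!
Up to the factor `|B_k|⁻¹`, `|M_{k,n} u|` is bounded by the integral of `|u|` over the translate
`x + A` of the annulus `A = B(0, r) \ B(0, r - √d 2⁻ⁿ)`, `r = 2⁻ᵏ`, since a dyadic cube of side
`2⁻ⁿ` has diameter `√d 2⁻ⁿ`. The map `u ↦ (x ↦ ∫_{x+A} |u|)` has norm at most `|A|` on every
`Lᵖ`, `1 ≤ p ≤ ∞` (Jensen on `A`, then Tonelli and translation invariance), and Bernoulli's
inequality gives `|A| ≤ d (√d 2⁻ⁿ / r) |B_k| = d √d 2^{k-n} |B_k|`.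
-/

open Metric Module
open scoped Pointwise

theorem rpow_lintegral_le_mul_lintegral_rpow {α : Type*} [MeasurableSpace α] (ν : Measure α)
    {f : α → ℝ≥0∞} (hf : AEMeasurable f ν) {q : ℝ} (hq : 1 ≤ q) :
    (∫⁻ a, f a ∂ν) ^ q ≤ ν Set.univ ^ (q - 1) * ∫⁻ a, f a ^ q ∂ν := by
  have hq0 : 0 < q := zero_lt_one.trans_le hq
  have holder :=
    eLpNorm'_le_eLpNorm'_mul_rpow_measure_univ zero_lt_one hq hf.aestronglyMeasurable
  simp only [eLpNorm'_eq_lintegral_enorm, enorm_eq_self, ENNReal.rpow_one, div_one] at holder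
  calc (∫⁻ a, f a ∂ν) ^ q
      ≤ ((∫⁻ a, f a ^ q ∂ν) ^ (1 / q) * ν Set.univ ^ (1 - 1 / q)) ^ q := by gcongr
    _ = ν Set.univ ^ (q - 1) * ∫⁻ a, f a ^ q ∂ν := by
      rw [ENNReal.mul_rpow_of_nonneg _ _ hq0.le, ← ENNReal.rpow_mul, ← ENNReal.rpow_mul,
        one_div_mul_cancel hq0.ne', ENNReal.rpow_one, mul_comm, sub_mul,
        one_div_mul_cancel hq0.ne', one_mul]

section Translates

variable {G : Type*} [MeasurableSpace G] [AddCommGroup G] [MeasurableAdd₂ G]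
  {μ : Measure G} [μ.IsAddLeftInvariant]

theorem eLpNormEssSup_setLIntegral_add_le (f : G → ℝ≥0∞) (A : Set G) :
    eLpNormEssSup (fun x => ∫⁻ z in A, f (x + z) ∂μ) μ ≤ μ A * eLpNormEssSup f μ := by
  refine eLpNormEssSup_le_of_ae_enorm_bound (.of_forall fun x => ?_)
  have hf_le : ∀ᵐ z ∂μ, f (x + z) ≤ eLpNormEssSup f μ :=
    (measurePreserving_add_left μ x).quasiMeasurePreserving.ae (enorm_ae_le_eLpNormEssSup f μ)
  calc ‖∫⁻ z in A, f (x + z) ∂μ‖ₑ ≤ ∫⁻ _ in A, eLpNormEssSup f μ ∂μ :=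
        lintegral_mono_ae (ae_restrict_of_ae hf_le)
    _ = μ A * eLpNormEssSup f μ := by rw [setLIntegral_const, mul_comm]

theorem setLIntegral_vadd (f : G → ℝ≥0∞) (x : G) (A : Set G) :
    ∫⁻ y in x +ᵥ A, f y ∂μ = ∫⁻ z in A, f (x + z) ∂μ :=
  ((measurePreserving_add_left μ x).setLIntegral_comp_emb
    (measurableEmbedding_addLeft x) f A).symm

variable [SFinite μ]

theorem lintegral_rpow_setLIntegral_add_le {f : G → ℝ≥0∞} (hf : Measurable f) (A : Set G) {q : ℝ}
    (hq : 1 ≤ q) :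
    ∫⁻ x, (∫⁻ z in A, f (x + z) ∂μ) ^ q ∂μ ≤ μ A ^ q * ∫⁻ x, f x ^ q ∂μ := by
  have hF : Measurable fun p : G × G => f (p.1 + p.2) ^ q :=
    (hf.comp measurable_add).pow_const q
  calc ∫⁻ x, (∫⁻ z in A, f (x + z) ∂μ) ^ q ∂μ
      ≤ ∫⁻ x, μ A ^ (q - 1) * ∫⁻ z in A, f (x + z) ^ q ∂μ ∂μ := by
        refine lintegral_mono fun x => ?_
        simpa using rpow_lintegral_le_mul_lintegral_rpow (μ.restrict A)
          (hf.comp (measurable_const_add x)).aemeasurable hq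
    _ = μ A ^ (q - 1) * ∫⁻ z in A, ∫⁻ x, f (z + x) ^ q ∂μ ∂μ := by
        rw [lintegral_const_mul _ hF.lintegral_prod_right',
          lintegral_lintegral_swap hF.aemeasurable]
        simp only [add_comm]
    _ = μ A ^ q * ∫⁻ x, f x ^ q ∂μ := by
        have hpow : μ A ^ q = μ A ^ (q - 1) * μ A := by
          conv_lhs => rw [← sub_add_cancel q 1]
          rw [ENNReal.rpow_add_of_nonneg _ _ (by linarith) zero_le_one, ENNReal.rpow_one]
        simp only [lintegral_add_left_eq_self (fun y => f y ^ q), setLIntegral_const, hpow]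
        ring

theorem eLpNorm_setLIntegral_add_le {f : G → ℝ≥0∞} (hf : Measurable f) (A : Set G) {p : ℝ≥0∞}
    (hp : 1 ≤ p) :
    eLpNorm (fun x => ∫⁻ z in A, f (x + z) ∂μ) p μ ≤ μ A * eLpNorm f p μ := by
  obtain rfl | hp_top := eq_or_ne p ∞
  · simpa only [eLpNorm_exponent_top] using eLpNormEssSup_setLIntegral_add_le f A
  have hp0 : p ≠ 0 := (zero_lt_one.trans_le hp).ne'
  have hq : 1 ≤ p.toReal := ENNReal.toReal_mono hp_top hp
  have hq0 : 0 < p.toReal := zero_lt_one.trans_le hq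
  simp only [eLpNorm_eq_lintegral_rpow_enorm_toReal hp0 hp_top, enorm_eq_self]
  calc (∫⁻ x, (∫⁻ z in A, f (x + z) ∂μ) ^ p.toReal ∂μ) ^ (1 / p.toReal)
      ≤ (μ A ^ p.toReal * ∫⁻ x, f x ^ p.toReal ∂μ) ^ (1 / p.toReal) := by
        gcongr; exact lintegral_rpow_setLIntegral_add_le hf A hq
    _ = μ A * (∫⁻ x, f x ^ p.toReal ∂μ) ^ (1 / p.toReal) := by
        rw [ENNReal.mul_rpow_of_nonneg _ _ (by positivity), ← ENNReal.rpow_mul,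
          mul_one_div_cancel hq0.ne', ENNReal.rpow_one]

theorem eLpNorm_setLIntegral_vadd_enorm_le {E : Type*} [NormedAddCommGroup E] {u : G → E}
    (hu : AEStronglyMeasurable u μ) (A : Set G) {p : ℝ≥0∞} (hp : 1 ≤ p) :
    eLpNorm (fun x => ∫⁻ y in x +ᵥ A, ‖u y‖ₑ ∂μ) p μ ≤ μ A * eLpNorm u p μ := by
  have hT : (fun x => ∫⁻ y in x +ᵥ A, ‖u y‖ₑ ∂μ)
      = fun x => ∫⁻ z in A, ‖hu.mk u (x + z)‖ₑ ∂μ := by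
    funext x
    rw [← setLIntegral_vadd (fun y => ‖hu.mk u y‖ₑ)]
    exact lintegral_congr_ae <| ae_restrict_of_ae <| hu.ae_eq_mk.mono fun y hy => by simp only [hy]
  rw [hT, eLpNorm_congr_ae hu.ae_eq_mk, ← eLpNorm_enorm]
  exact eLpNorm_setLIntegral_add_le hu.stronglyMeasurable_mk.enorm A hp

end Translates

theorem addHaar_ball_diff_ball_le {E : Type*} [NormedAddCommGroup E] [NormedSpace ℝ E]
    [MeasurableSpace E] [BorelSpace E] [FiniteDimensional ℝ E] (μ : Measure E)
    [μ.IsAddHaarMeasure] (x : E) {r δ : ℝ} (hr : 0 < r) (hδ : 0 ≤ δ)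
    (hE : δ < r ∨ 0 < finrank ℝ E) :
    μ (ball x r \ ball x (r - δ)) ≤ ENNReal.ofReal (finrank ℝ E * δ / r) * μ (ball x r) := by
  set c : ℝ := finrank ℝ E * δ / r
  by_cases hδr : δ < r
  · set t : ℝ := 1 - δ / r
    have ht : 0 < t := by rw [sub_pos, div_lt_one hr]; exact hδr
    have hinner : μ (ball x (r - δ)) = ENNReal.ofReal (t ^ finrank ℝ E) * μ (ball x r) := by
      rw [show r - δ = t * r by simp only [t]; field_simp, Measure.addHaar_ball_mul_of_pos μ x ht,
        ← Measure.addHaar_ball_center μ x]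
    have hbernoulli : 1 ≤ c + t ^ finrank ℝ E := by
      have hc : c = -(finrank ℝ E * (t - 1)) := by simp only [c, t]; ring
      linarith [one_add_mul_sub_le_pow (by linarith : -1 ≤ t) (finrank ℝ E)]
    rw [measure_sdiff (ball_subset_ball (by linarith)) measurableSet_ball.nullMeasurableSet
      measure_ball_lt_top.ne, tsub_le_iff_right, hinner, ← add_mul]
    calc μ (ball x r) = 1 * μ (ball x r) := (one_mul _).symm
      _ ≤ _ := by
        gcongr
        calc (1 : ℝ≥0∞) = ENNReal.ofReal 1 := ENNReal.ofReal_one.symm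
          _ ≤ ENNReal.ofReal (c + t ^ finrank ℝ E) := ENNReal.ofReal_le_ofReal hbernoulli
          _ ≤ _ := ENNReal.ofReal_add_le
  · have hd : 1 ≤ (finrank ℝ E : ℝ) := by exact_mod_cast hE.resolve_left hδr
    have hc : 1 ≤ c := by
      rw [le_div_iff₀ hr, one_mul]
      nlinarith
    calc μ (ball x r \ ball x (r - δ)) ≤ μ (ball x r) := measure_mono Set.sdiff_subset
      _ ≤ _ := le_mul_of_one_le_left zero_le (ENNReal.one_le_ofReal.2 hc)

theorem dist_le_of_mem_dyadicCubeOf {d : ℕ} {n : ℤ} {x y : EuclideanSpace ℝ (Fin d)}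
    (hy : y ∈ dyadicCubeOf d n x) : dist y x ≤ √d * 2 ^ (-n) := by
  have hcoord : ∀ i, dist (y i) (x i) ≤ 2 ^ (-n) := fun i => by
    have h := Int.abs_sub_lt_one_of_floor_eq_floor (hy i)
    rw [← mul_sub, abs_mul, abs_of_pos (by positivity), ← lt_div_iff₀' (by positivity),
      one_div, ← zpow_neg] at h
    exact h.le
  have hlip := (PiLp.lipschitzWith_toLp 2 fun _ : Fin d => ℝ).dist_le_mul y.ofLp x.ofLp
  rw [WithLp.toLp_ofLp, WithLp.toLp_ofLp] at hlip
  refine hlip.trans ?_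
  have hK : ((Fintype.card (Fin d) : NNReal) ^ (1 / (2 : ℝ≥0∞)).toReal : NNReal) = √d := by
    simp [Real.sqrt_eq_rpow]
  rw [hK]
  gcongr
  exact (dist_pi_le_iff (by positivity)).2 hcoord

theorem boundaryPiece_subset_vadd (d : ℕ) (k n : ℤ) (x : EuclideanSpace ℝ (Fin d)) :
    boundaryPiece d k n x
      ⊆ x +ᵥ (ball 0 (2 ^ (-k)) \
        ball (0 : EuclideanSpace ℝ (Fin d)) (2 ^ (-k) - √d * 2 ^ (-n))) := by
  rw [Set.vadd_set_sdiff, vadd_ball, vadd_ball, vadd_eq_add, add_zero]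
  rintro y ⟨hy, w, hw, hw_sphere⟩
  refine ⟨hy, fun hy_inner => ?_⟩
  have hyw : dist w y ≤ √d * 2 ^ (-n) := dist_le_of_mem_dyadicCubeOf hw
  have := dist_triangle w y x
  rw [mem_sphere.1 hw_sphere] at this
  rw [mem_ball] at hy_inner
  linarith

theorem volume_ball_diff_ball_le (d : ℕ) (k n : ℤ) :
    volume (ball (0 : EuclideanSpace ℝ (Fin d)) (2 ^ (-k)) \ ball 0 (2 ^ (-k) - √d * 2 ^ (-n)))
      ≤ ENNReal.ofReal (d * √d * 2 ^ (k - n)) *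
        volume (ball (0 : EuclideanSpace ℝ (Fin d)) (2 ^ (-k))) := by
  have hr : (0 : ℝ) < 2 ^ (-k) := by positivity
  have hdim : √d * 2 ^ (-n) < 2 ^ (-k) ∨ 0 < finrank ℝ (EuclideanSpace ℝ (Fin d)) := by
    rcases d.eq_zero_or_pos with rfl | hd
    · exact .inl (by simpa using hr)
    · exact .inr (by simpa using hd)
  have hratio : (d : ℝ) * √d * 2 ^ (k - n) = d * (√d * 2 ^ (-n)) / 2 ^ (-k) := by
    rw [zpow_sub₀ two_ne_zero, zpow_neg, zpow_neg]
    field_simp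
  rw [hratio]
  simpa using addHaar_ball_diff_ball_le volume 0 hr (by positivity) hdim

/-- For `k < n` and `1 ≤ p ≤ ∞`, `‖M_{k,n} u‖_p ≤ C_d 2^{k-n} ‖u‖_p`. -/
theorem Mkn_norm_le (d : ℕ) :
    ∃ C : ℝ, 0 < C ∧ ∀ (k n : ℤ), k < n → ∀ (p : ℝ≥0∞), 1 ≤ p →
      ∀ u : EuclideanSpace ℝ (Fin d) → ℝ, MemLp u p volume →
      eLpNorm (Mkn d k n u) p volume
        ≤ ENNReal.ofReal (C * (2:ℝ) ^ (k - n)) * eLpNorm u p volume := by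
  refine ⟨d * √d + 1, by positivity, fun k n _ p hp u hu => ?_⟩
  set V := volume (ball (0 : EuclideanSpace ℝ (Fin d)) (2 ^ (-k)))
  set A := ball (0 : EuclideanSpace ℝ (Fin d)) (2 ^ (-k)) \ ball 0 (2 ^ (-k) - √d * 2 ^ (-n))
  have hV : V ≠ 0 := (measure_ball_pos _ _ (by positivity)).ne'
  have hV_top : V ≠ ∞ := measure_ball_lt_top.ne
  have hpt (x) : ‖∫ y in boundaryPiece d k n x, u y‖ₑ ≤ ‖∫⁻ y in x +ᵥ A, ‖u y‖ₑ‖ₑ :=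
    (enorm_integral_le_lintegral_enorm _).trans
      (lintegral_mono_set (boundaryPiece_subset_vadd d k n x))
  calc eLpNorm (Mkn d k n u) p volume
      = eLpNorm (V.toReal⁻¹ • fun x => ∫ y in boundaryPiece d k n x, u y) p volume := rfl
    _ ≤ V⁻¹ * eLpNorm (fun x => ∫⁻ y in x +ᵥ A, ‖u y‖ₑ) p volume := by
        refine eLpNorm_const_smul_le.trans ?_
        rw [enorm_inv (ENNReal.toReal_pos hV hV_top).ne', Real.enorm_toReal hV_top]
        gcongr
        exact eLpNorm_mono_enorm hpt
    _ ≤ V⁻¹ * (volume A * eLpNorm u p volume) := by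
        gcongr; exact eLpNorm_setLIntegral_vadd_enorm_le hu.1 A hp
    _ ≤ V⁻¹ * (ENNReal.ofReal (d * √d * 2 ^ (k - n)) * V * eLpNorm u p volume) := by
        gcongr; exact volume_ball_diff_ball_le d k n
    _ = ENNReal.ofReal (d * √d * 2 ^ (k - n)) * eLpNorm u p volume := by
        rw [mul_right_comm _ V, mul_comm V⁻¹, mul_assoc, ENNReal.mul_inv_cancel hV hV_top,
          mul_one]
    _ ≤ ENNReal.ofReal ((d * √d + 1) * 2 ^ (k - n)) * eLpNorm u p volume := by
        gcongr; linarith
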